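/- Fix integers r ≥ 4 and k ≥ r-2 with r(k+1) even. There is a bijection between r-sets T = {L_1,...,L_r} of non-intersecting type with |⋃ L_i| = r(k+1)/2 (up to renumbering of ground-set elements) and tuples of positive integers (a_{l,t})_{2 ≤ l < t ≤ r} with Σ_{2 ≤ l < t ≤ r} a_{l,t} = (r-2)(k+1)/2 such that the induced values a_{1,j} = k+1 - Σ_{l ∈ [r]\{1,j}} a_{l,j} are all positive. -/

import Mathlib

def IsNonIntRSet (r k : ℕ) (L : Fin r → Finset ℕ) : Prop :=
  (∀ i, (L i).card = k + 1) ∧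
  (∀ i j, i ≠ j → (L i ∩ L j).Nonempty) ∧
  (∀ i j l, i ≠ j → j ≠ l → i ≠ l → L i ∩ L j ∩ L l = ∅) ∧
  (∀ i : Fin r, Finset.univ.biUnion L = (Finset.univ.erase i).biUnion L)

/-! In a non-intersecting `r`-set every point of `⋃ L_i` lies in exactly two of the `L_i`, so the
blocks `A_{i,j} = L_i ∩ L_j` partition the union, each `L_i` is the disjoint union of the `A_{i,j}`
with `j ≠ i`, and double counting gives `2 |⋃ L_i| = r (k+1)`. Two such families with the same
block sizes therefore differ by a permutation of the ground set carrying blocks to blocks.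
Conversely, the tuple `(a_{l,t})` completed by the induced `a_{1,j}` is a symmetric positive weight
all of whose row sums are `k+1` (for the row of `1`: `(r-1)(k+1) - 2 Σ a_{l,t} = k+1`), and disjoint
blocks of these sizes assemble into the required family. -/

open Finset Function

def symmPair {ι M : Type*} [LinearOrder ι] (a : ι → ι → M) (i j : ι) : M :=
  if i < j then a i j else a j i

theorem symmPair_comm {ι M : Type*} [LinearOrder ι] (a : ι → ι → M) (i j : ι) :
    symmPair a i j = symmPair a j i := by
  unfold symmPair
  split_ifs with h₁ h₂ h₂
  · exact absurd (h₁.trans h₂) (lt_irrefl i)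
  · rfl
  · rfl
  · rw [le_antisymm (not_lt.1 h₂) (not_lt.1 h₁)]

theorem sum_sum_erase_symmPair {ι M : Type*} [LinearOrder ι] [AddCommMonoid M] (s : Finset ι)
    (a : ι → ι → M) :
    ∑ j ∈ s, ∑ l ∈ s.erase j, symmPair a l j = 2 • ∑ p ∈ s ×ˢ s with p.1 < p.2, a p.1 p.2 := by
  have hsplit : ∀ j ∈ s, ∑ l ∈ s.erase j, symmPair a l j =
      ∑ l ∈ s with l < j, a l j + ∑ l ∈ s with j < l, a j l := by
    intro j _
    rw [← sum_filter_add_sum_filter_not (s.erase j) (· < j)]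
    congr 1
    · refine sum_congr ?_ fun l hl => if_pos (mem_filter.1 hl).2
      ext l; simp only [mem_filter, mem_erase]; grind
    · refine sum_congr ?_ fun l hl => if_neg (mem_filter.1 hl).2.not_gt
      ext l; simp only [mem_filter, mem_erase]; grind
  rw [sum_congr rfl hsplit, sum_add_distrib, two_smul, sum_filter, sum_product_right]
  congr 1
  · simp only [sum_filter]
  · rw [sum_comm]; simp only [sum_filter]

theorem Set.unionEqSigmaOfDisjoint_fst {ι β : Type*} {t : ι → Set β}
    (h : Pairwise (Disjoint on t)) {i : ι} (x : ⋃ i, t i) (hx : (x : β) ∈ t i) :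
    (Set.unionEqSigmaOfDisjoint h x).1 = i := by
  by_contra hne
  have hmem := (Set.unionEqSigmaOfDisjoint h x).2.2
  rw [Set.coe_snd_unionEqSigmaOfDisjoint] at hmem
  exact Set.disjoint_left.1 (h hne) hmem hx

theorem Finset.exists_perm_image_eq_of_pairwise_disjoint {ι α : Type*} [Finite ι]
    [DecidableEq α] {Q Q' : ι → Finset α} (hQ : Pairwise (Disjoint on Q))
    (hQ' : Pairwise (Disjoint on Q'))
    (hcard : ∀ p, #(Q p) = #(Q' p)) : ∃ σ : Equiv.Perm α, ∀ p, (Q p).image σ = Q' p := by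
  classical
  have hQc : Pairwise (Disjoint on fun p => (Q p : Set α)) := fun p q h => disjoint_coe.2 (hQ h)
  have hQc' : Pairwise (Disjoint on fun p => (Q' p : Set α)) :=
    fun p q h => disjoint_coe.2 (hQ' h)
  let e : (⋃ p, (Q p : Set α)) ≃ (⋃ p, (Q' p : Set α)) :=
    (Set.unionEqSigmaOfDisjoint hQc).trans <|
      (Equiv.sigmaCongrRight fun p => Finset.equivOfCardEq (hcard p)).trans
        (Set.unionEqSigmaOfDisjoint hQc').symm
  have : Finite {x | x ∈ ⋃ p, (Q p : Set α)} :=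
    (Set.finite_iUnion fun p => (Q p).finite_toSet).to_subtype
  refine ⟨e.extendSubtype, fun p => eq_of_subset_of_card_le ?_ ?_⟩
  · intro y hy
    obtain ⟨x, hx, rfl⟩ := mem_image.1 hy
    have hx' : x ∈ ⋃ p, (Q p : Set α) := Set.mem_iUnion_of_mem p hx
    have hmem : (e ⟨x, hx'⟩ : α) ∈ Q' (Set.unionEqSigmaOfDisjoint hQc ⟨x, hx'⟩).1 :=
      (Finset.equivOfCardEq _ _).2
    rw [Equiv.extendSubtype_apply_of_mem e x hx']
    rwa [Set.unionEqSigmaOfDisjoint_fst hQc ⟨x, hx'⟩ hx] at hmem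
  · rw [card_image_of_injective _ (Equiv.injective _), hcard]

section Blocks

variable {ι α : Type*} [Fintype ι] [DecidableEq ι] [DecidableEq α]

def blockUnion (B : Sym2 ι → Finset α) (i : ι) : Finset α :=
  (univ.erase i).biUnion fun j => B s(i, j)

theorem mem_blockUnion {B : Sym2 ι → Finset α} {i : ι} {x : α} :
    x ∈ blockUnion B i ↔ ∃ j ≠ i, x ∈ B s(i, j) := by
  simp [blockUnion]

variable {B : Sym2 ι → Finset α}

theorem blockUnion_inter (hB : Pairwise (Disjoint on B)) {i j : ι} (hij : i ≠ j) :
    blockUnion B i ∩ blockUnion B j = B s(i, j) := by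
  ext x
  simp only [mem_inter, mem_blockUnion]
  constructor
  · rintro ⟨⟨m, -, hm⟩, ⟨m', hm'j, hm'⟩⟩
    have hs : s(i, m) = s(j, m') := by
      by_contra hne
      exact disjoint_left.1 (hB hne) hm hm'
    rcases Sym2.eq_iff.1 hs with ⟨rfl, -⟩ | ⟨-, rfl⟩
    · exact absurd rfl hij
    · exact hm
  · intro hx
    exact ⟨⟨j, hij.symm, hx⟩, ⟨i, hij, Sym2.eq_swap ▸ hx⟩⟩

theorem card_blockUnion (hB : Pairwise (Disjoint on B)) (i : ι) :
    #(blockUnion B i) = ∑ j ∈ univ.erase i, #(B s(i, j)) :=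
  card_biUnion fun _ _ _ _ hjj' => hB (Sym2.congr_right.not.2 hjj')

end Blocks

theorem exists_pairwise_disjoint_card_eq {ι : Type*} [Countable ι] (n : ι → ℕ) :
    ∃ B : ι → Finset ℕ, Pairwise (Disjoint on B) ∧ ∀ i, #(B i) = n i := by
  obtain ⟨f, hf⟩ := Countable.exists_injective_nat ι
  refine ⟨fun i => (range (n i)).image (Nat.pair (f i)), fun i j hij => ?_, fun i => ?_⟩
  · simp only [onFun, disjoint_left, mem_image, not_exists, not_and]
    rintro _ ⟨m, -, rfl⟩ m' - h
    exact hij (hf (Nat.pair_eq_pair.1 h).1.symm)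
  · rw [card_image_of_injective _ fun m m' h => (Nat.pair_eq_pair.1 h).2, card_range]

theorem isNonIntRSet_blockUnion {r k : ℕ} {B : Sym2 (Fin r) → Finset ℕ}
    (hB : Pairwise (Disjoint on B)) (hne : ∀ i j, i ≠ j → (B s(i, j)).Nonempty)
    (hcard : ∀ i, ∑ j ∈ univ.erase i, #(B s(i, j)) = k + 1) :
    IsNonIntRSet r k (blockUnion B) := by
  refine ⟨fun i => (card_blockUnion hB i).trans (hcard i), fun i j hij => ?_,
    fun i j l hij hjl hil => ?_, fun m => ?_⟩
  · rw [blockUnion_inter hB hij]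
    exact hne i j hij
  · rw [inter_assoc, inter_inter_distrib_left, blockUnion_inter hB hij,
      blockUnion_inter hB hil, ← disjoint_iff_inter_eq_empty]
    exact hB (Sym2.congr_right.not.2 hjl)
  · refine (biUnion_subset_biUnion_of_subset_left _ (erase_subset _ _)).antisymm' ?_
    intro x hx
    obtain ⟨i, -, hi⟩ := mem_biUnion.1 hx
    by_cases him : i = m
    · subst him
      obtain ⟨j, hji, hj⟩ := mem_blockUnion.1 hi
      exact mem_biUnion.2 ⟨j, mem_erase.2 ⟨hji, mem_univ _⟩,
        mem_blockUnion.2 ⟨i, hji.symm, Sym2.eq_swap ▸ hj⟩⟩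
    · exact mem_biUnion.2 ⟨i, mem_erase.2 ⟨him, mem_univ _⟩, hi⟩

/- Diagonal blocks are empty, so that the blocks of a non-intersecting family are pairwise
disjoint. -/
def pairBlocks {ι α : Type*} [DecidableEq ι] [DecidableEq α] (L : ι → Finset α) :
    Sym2 ι → Finset α :=
  Sym2.lift ⟨fun i j => if i = j then ∅ else L i ∩ L j, fun i j => by
    simp only [eq_comm, inter_comm]⟩

theorem pairBlocks_mk {ι α : Type*} [DecidableEq ι] [DecidableEq α] (L : ι → Finset α)
    {i j : ι} (hij : i ≠ j) : pairBlocks L s(i, j) = L i ∩ L j := by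
  simp [pairBlocks, hij]

namespace IsNonIntRSet

variable {r k : ℕ} {L : Fin r → Finset ℕ}

theorem eq_or_eq_of_mem (hL : IsNonIntRSet r k L) {i j l : Fin r} {x : ℕ} (hij : i ≠ j)
    (hi : x ∈ L i) (hj : x ∈ L j) (hl : x ∈ L l) : l = i ∨ l = j := by
  by_contra! h
  have hx : x ∈ L i ∩ L j ∩ L l := by simp [hi, hj, hl]
  rw [hL.2.2.1 i j l hij h.2.symm h.1.symm] at hx
  exact notMem_empty x hx

theorem exists_ne_mem (hL : IsNonIntRSet r k L) {i : Fin r} {x : ℕ} (hx : x ∈ L i) :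
    ∃ j ≠ i, x ∈ L j := by
  have : x ∈ (univ.erase i).biUnion L := hL.2.2.2 i ▸ mem_biUnion.2 ⟨i, mem_univ _, hx⟩
  simpa using this

theorem card_filter_mem (hL : IsNonIntRSet r k L) {x : ℕ} (hx : x ∈ univ.biUnion L) :
    #{i | x ∈ L i} = 2 := by
  obtain ⟨i, -, hi⟩ := mem_biUnion.1 hx
  obtain ⟨j, hji, hj⟩ := hL.exists_ne_mem hi
  refine card_eq_two.2 ⟨i, j, hji.symm, ?_⟩
  ext l
  simp only [mem_filter, mem_univ, true_and, mem_insert, mem_singleton]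
  refine ⟨hL.eq_or_eq_of_mem hji.symm hi hj, ?_⟩
  rintro (rfl | rfl) <;> assumption

theorem two_mul_card_biUnion (hL : IsNonIntRSet r k L) :
    2 * #(univ.biUnion L) = r * (k + 1) := by
  have hdouble := sum_card_bipartiteAbove_eq_sum_card_bipartiteBelow (s := univ)
    (t := univ.biUnion L) (fun i x => x ∈ L i)
  have habove : ∀ i, (univ.biUnion L).bipartiteAbove (fun i x => x ∈ L i) i = L i := fun i =>
    filter_mem_eq_inter.trans (inter_eq_right.2 (subset_biUnion_of_mem L (mem_univ i)))
  simp only [habove, hL.1, sum_const, card_univ, Fintype.card_fin, smul_eq_mul,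
    bipartiteBelow] at hdouble
  rw [hdouble, sum_congr rfl fun x hx => hL.card_filter_mem hx, sum_const, smul_eq_mul,
    mul_comm]

theorem pairwise_disjoint_pairBlocks (hL : IsNonIntRSet r k L) :
    Pairwise (Disjoint on pairBlocks L) := by
  intro s t hst
  induction s using Sym2.ind with | _ i j => ?_
  induction t using Sym2.ind with | _ i' j' => ?_
  by_cases hij : i = j
  · simp [onFun, pairBlocks, hij]
  by_cases hij' : i' = j'
  · simp [onFun, pairBlocks, hij']
  simp only [onFun, pairBlocks_mk L hij, pairBlocks_mk L hij', disjoint_left, mem_inter]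
  rintro x ⟨hi, hj⟩ ⟨hi', hj'⟩
  apply hst
  rcases hL.eq_or_eq_of_mem hij hi hj hi' with rfl | rfl <;>
    rcases hL.eq_or_eq_of_mem hij hi hj hj' with rfl | rfl
  all_goals first | exact absurd rfl hij' | rfl | exact Sym2.eq_swap

theorem blockUnion_pairBlocks (hL : IsNonIntRSet r k L) : blockUnion (pairBlocks L) = L := by
  ext i x
  rw [mem_blockUnion]
  constructor
  · rintro ⟨j, hji, hx⟩
    exact (mem_inter.1 (pairBlocks_mk L hji.symm ▸ hx)).1
  · intro hx
    obtain ⟨j, hji, hj⟩ := hL.exists_ne_mem hx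
    exact ⟨j, hji, pairBlocks_mk L hji.symm ▸ mem_inter.2 ⟨hx, hj⟩⟩

theorem exists_perm_image_eq {L' : Fin r → Finset ℕ} (hL : IsNonIntRSet r k L)
    (hL' : IsNonIntRSet r k L') (hcard : ∀ i j, i ≠ j → #(L i ∩ L j) = #(L' i ∩ L' j)) :
    ∃ σ : ℕ ≃ ℕ, ∀ i, L' i = (L i).image σ := by
  obtain ⟨σ, hσ⟩ := exists_perm_image_eq_of_pairwise_disjoint hL.pairwise_disjoint_pairBlocks
    hL'.pairwise_disjoint_pairBlocks fun s => by
      induction s using Sym2.ind with | _ i j => ?_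
      by_cases hij : i = j
      · simp [pairBlocks, hij]
      · rw [pairBlocks_mk L hij, pairBlocks_mk L' hij, hcard i j hij]
  refine ⟨σ, fun i => ?_⟩
  rw [← hL.blockUnion_pairBlocks, ← hL'.blockUnion_pairBlocks]
  simp only [blockUnion, biUnion_image, hσ]

end IsNonIntRSet

section CompletedWeight

variable {r : ℕ} (k : ℕ) (z : Fin r) (a : Fin r → Fin r → ℕ)

/- `z` plays the role of the paper's index `1` and `inducedWeight k z a j` is its `a_{1,j}`; the
subtraction is truncated, which is harmless once the sums are assumed `< k + 1`. -/
def inducedWeight (j : Fin r) : ℕ :=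
  k + 1 - ∑ l ∈ (univ.erase z).erase j, symmPair a l j

def completedWeight (i j : Fin r) : ℕ :=
  if i = z then inducedWeight k z a j
  else if j = z then inducedWeight k z a i
  else symmPair a i j

theorem completedWeight_comm (i j : Fin r) :
    completedWeight k z a i j = completedWeight k z a j i := by
  unfold completedWeight
  split_ifs <;> subst_vars <;> simp [symmPair_comm]

variable {k z a}

theorem completedWeight_pos (hpos : ∀ l t, l ≠ z → t ≠ z → l < t → 0 < a l t)
    (hS : ∀ j ≠ z, ∑ l ∈ (univ.erase z).erase j, symmPair a l j < k + 1)
    {i j : Fin r} (hij : i ≠ j) : 0 < completedWeight k z a i j := by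
  unfold completedWeight
  split_ifs with hi hj
  · exact Nat.sub_pos_of_lt (hS j (hi ▸ hij.symm))
  · exact Nat.sub_pos_of_lt (hS i hi)
  · unfold symmPair
    split_ifs with h
    · exact hpos i j hi hj h
    · exact hpos j i hj hi (lt_of_le_of_ne (not_lt.1 h) hij.symm)

theorem sum_completedWeight_of_ne
    (hS : ∀ j ≠ z, ∑ l ∈ (univ.erase z).erase j, symmPair a l j < k + 1)
    {i : Fin r} (hi : i ≠ z) : ∑ j ∈ univ.erase i, completedWeight k z a i j = k + 1 := by
  have hrest : ∑ j ∈ (univ.erase z).erase i, completedWeight k z a i j =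
      ∑ l ∈ (univ.erase z).erase i, symmPair a l i := sum_congr rfl fun j hj => by
    have hjz : j ≠ z := (mem_erase.1 (mem_erase.1 hj).2).1
    simp [completedWeight, hi, hjz, symmPair_comm]
  rw [← add_sum_erase _ _ (mem_erase.2 ⟨Ne.symm hi, mem_univ z⟩), erase_right_comm, hrest,
    completedWeight, if_neg hi, if_pos rfl, inducedWeight]
  exact Nat.sub_add_cancel (hS i hi).le

theorem sum_completedWeight_self (hr : 2 ≤ r)
    (hsum : 2 * ∑ p ∈ univ.filter (fun p : Fin r × Fin r => p.1 ≠ z ∧ p.2 ≠ z ∧ p.1 < p.2),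
      a p.1 p.2 = (r - 2) * (k + 1))
    (hS : ∀ j ≠ z, ∑ l ∈ (univ.erase z).erase j, symmPair a l j < k + 1) :
    ∑ j ∈ univ.erase z, completedWeight k z a z j = k + 1 := by
  have hpairs : (univ.erase z ×ˢ univ.erase z).filter (fun p : Fin r × Fin r => p.1 < p.2) =
      univ.filter (fun p : Fin r × Fin r => p.1 ≠ z ∧ p.2 ≠ z ∧ p.1 < p.2) := by
    ext p
    simp [and_assoc]
  have hdouble : ∑ j ∈ univ.erase z, ∑ l ∈ (univ.erase z).erase j, symmPair a l j =
      (r - 2) * (k + 1) := by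
    rw [sum_sum_erase_symmPair, hpairs, smul_eq_mul, hsum]
  simp only [completedWeight, if_true, inducedWeight]
  rw [sum_tsub_distrib _ fun j hj => (hS j (mem_erase.1 hj).1).le, hdouble, sum_const,
    card_erase_of_mem (mem_univ z), card_univ, Fintype.card_fin, smul_eq_mul, ← Nat.sub_mul]
  rw [show r - 1 - (r - 2) = 1 by omega, one_mul]

end CompletedWeight

theorem exists_isNonIntRSet_inter_card {r k : ℕ} (hr : 2 ≤ r) (z : Fin r)
    (a : Fin r → Fin r → ℕ) (hpos : ∀ l t, l ≠ z → t ≠ z → l < t → 0 < a l t)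
    (hsum : 2 * ∑ p ∈ univ.filter (fun p : Fin r × Fin r => p.1 ≠ z ∧ p.2 ≠ z ∧ p.1 < p.2),
      a p.1 p.2 = (r - 2) * (k + 1))
    (hS : ∀ j ≠ z, ∑ l ∈ (univ.erase z).erase j, symmPair a l j < k + 1) :
    ∃ L : Fin r → Finset ℕ, IsNonIntRSet r k L ∧
      ∀ l t, l ≠ z → t ≠ z → l < t → #(L l ∩ L t) = a l t := by
  obtain ⟨B, hB, hBcard⟩ :=
    exists_pairwise_disjoint_card_eq
      (Sym2.lift ⟨completedWeight k z a, completedWeight_comm k z a⟩)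
  have hw : ∀ i j, #(B s(i, j)) = completedWeight k z a i j := fun i j => by
    rw [hBcard, Sym2.lift_mk]
  refine ⟨blockUnion B, isNonIntRSet_blockUnion hB (fun i j hij => ?_) (fun i => ?_),
    fun l t hl ht hlt => ?_⟩
  · exact card_pos.1 (hw i j ▸ completedWeight_pos hpos hS hij)
  · simp only [hw]
    by_cases hi : i = z
    · subst hi
      exact sum_completedWeight_self hr hsum hS
    · exact sum_completedWeight_of_ne hS hi
  · rw [blockUnion_inter hB hlt.ne, hw]
    simp [completedWeight, symmPair, hl, ht, hlt]

/-- the classification of `r`-sets of non-intersecting type with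
`|⋃ L_i| = r(k+1)/2`: they correspond, up to renumbering of the ground set, to
tuples of positive integers `(a_{l,t})_{2 ≤ l < t ≤ r}` with
`Σ a_{l,t} = (r-2)(k+1)/2` whose induced values
`a_{1,j} = k+1 - Σ_{l ≠ 1,j} a_{l,j}` are positive.  (The paper's index `1` is
the index `⟨0,_⟩` of `Fin r`; sums are doubled to avoid division.)  The first
conjunct is surjectivity (existence of an `r`-set realizing each admissible
tuple) and the second is injectivity up to relabeling of the ground set. -/
theorem stmt_5 (r k : ℕ) (hr : 4 ≤ r) :
    ((∀ a : Fin r → Fin r → ℕ,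
      (∀ l t : Fin r, l ≠ (⟨0, by omega⟩ : Fin r) → t ≠ (⟨0, by omega⟩ : Fin r) →
        l < t → 0 < a l t) →
      2 * (∑ p ∈ Finset.univ.filter
            (fun p : Fin r × Fin r =>
              p.1 ≠ (⟨0, by omega⟩ : Fin r) ∧ p.2 ≠ (⟨0, by omega⟩ : Fin r) ∧ p.1 < p.2),
            a p.1 p.2) = (r - 2) * (k + 1) →
      (∀ j : Fin r, j ≠ (⟨0, by omega⟩ : Fin r) →
        ∑ l ∈ (Finset.univ.erase (⟨0, by omega⟩ : Fin r)).erase j,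
            (if l < j then a l j else a j l) < k + 1) →
      ∃ L : Fin r → Finset ℕ, IsNonIntRSet r k L ∧
        2 * (Finset.univ.biUnion L).card = r * (k + 1) ∧
        (∀ l t : Fin r, l ≠ (⟨0, by omega⟩ : Fin r) → t ≠ (⟨0, by omega⟩ : Fin r) →
          l < t → (L l ∩ L t).card = a l t))) ∧
    (∀ L L' : Fin r → Finset ℕ, IsNonIntRSet r k L → IsNonIntRSet r k L' →
      2 * (Finset.univ.biUnion L).card = r * (k + 1) →
      2 * (Finset.univ.biUnion L').card = r * (k + 1) →
      (∀ i j : Fin r, i ≠ j → (L i ∩ L j).card = (L' i ∩ L' j).card) →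
      ∃ σ : ℕ ≃ ℕ, ∀ i, L' i = (L i).image σ) := by
  refine ⟨fun a hpos hsum hS => ?_,
    fun L L' hL hL' _ _ hcard => hL.exists_perm_image_eq hL' hcard⟩
  obtain ⟨L, hL, hLa⟩ := exists_isNonIntRSet_inter_card (by omega) _ a hpos hsum hS
  exact ⟨L, hL, hL.two_mul_card_biUnion, hLa⟩
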